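/- Let L be a first-order language all of whose symbols are function symbols of arity ≥ 1, and let 𝒜 be an orderly L-algebra. Then there exists an L-structure 𝔄 whose underlying set is the universe ‖𝒜‖ of 𝒜 and a sequence a : ℕ → ‖𝒜‖ such that 𝒜 is the orderly L-algebra induced from 𝔄 by a, i.e., 𝒜(t) = t^𝔄[a] for every orderly term t. -/

import Mathlib

open Function Set

universe u v w

/-- Terms of a purely functional first-order language whose function symbols
of arity `n` form the type `F n`, with variables indexed by `ℕ`. -/
inductive Tm (F : ℕ → Type u) : Type u
  | var : ℕ → Tm F
  | func : {n : ℕ} → F n → (Fin n → Tm F) → Tm F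

namespace Tm

variable {F : ℕ → Type u} {A : Type v} {β : Type w}

/-- The list of (indices of) variables occurring in a term, from left to right. -/
def varList : Tm F → List ℕ
  | .var i => [i]
  | .func (n := n) _ ts => (List.finRange n).flatMap fun i => (ts i).varList

/-- A term is *orderly* if the indices of the variables occurring in it,
read from left to right, are strictly increasing. -/
def Orderly (t : Tm F) : Prop := t.varList.Chain' (· < ·)

/-- `TermLT s t` iff the index of the last variable of `s` is less than the
index of the first variable of `t`. -/
def TermLT (s t : Tm F) : Prop :=
  ∃ i j, s.varList.getLast? = some i ∧ t.varList.head? = some j ∧ i < j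

/-- An infinite sequence of orderly terms is *admissible* iff it is increasing
with respect to `TermLT`. -/
def Admissible (ts : ℕ → Tm F) : Prop :=
  (∀ i, (ts i).Orderly) ∧ ∀ i, TermLT (ts i) (ts (i + 1))

/-- `s.subst σ` replaces each variable `vᵢ` in `s` by `σ i`. -/
def subst (σ : ℕ → Tm F) : Tm F → Tm F
  | .var i => σ i
  | .func f ts => .func f fun i => (ts i).subst σ

/-- Interpretation of a term in a structure with underlying set `A` whose
interpretation of the function symbols is `I`, under the assignment `a`. -/
def realize (I : ∀ n, F n → (Fin n → A) → A) (a : ℕ → A) : Tm F → A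
  | .var i => a i
  | .func (n := n) f ts => I n f fun i => (ts i).realize I a

end Tm

section General

variable {F : ℕ → Type u} {A : Type v} {β : Type w}

/-- `b` is a reduction of `a` (with respect to the algebra `(A, I)`). -/
def SeqReduction (I : ∀ n, F n → (Fin n → A) → A) (b a : ℕ → A) : Prop :=
  ∃ ts : ℕ → Tm F, Tm.Admissible ts ∧ ∀ i, b i = (ts i).realize I a

/-- The set of finite reductions of `a`. -/
def FR (I : ∀ n, F n → (Fin n → A) → A) (a : ℕ → A) : Set A :=
  { x | ∃ t : Tm F, t.Orderly ∧ x = t.realize I a }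

/-- `(A, I)` is a Ramsey algebra. -/
def RamseyAlg (I : ∀ n, F n → (Fin n → A) → A) : Prop :=
  ∀ (a : ℕ → A) (X : Set A),
    ∃ b, SeqReduction I b a ∧ (FR I b ⊆ X ∨ FR I b ∩ X = ∅)

/-- `(A, I)` is Ramsey below `a`. -/
def RamseyBelow (I : ∀ n, F n → (Fin n → A) → A) (a : ℕ → A) : Prop :=
  ∀ b, SeqReduction I b a → ∀ X : Set A,
    ∃ c, SeqReduction I c b ∧ (FR I c ⊆ X ∨ FR I c ∩ X = ∅)

/-- An increasing tuple `t₁ < t₂ < ⋯ < tₙ` of orderly terms. -/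
def OrdTuple {n : ℕ} (t : Fin n → Tm F) : Prop :=
  (∀ i, (t i).Orderly) ∧ ∀ i j : Fin n, i < j → Tm.TermLT (t i) (t j)

/-- `𝒜` (as a function on orderly terms) is an orderly algebra. -/
def IsOrderlyAlg (𝒜 : Tm F → β) : Prop :=
  ∀ (n : ℕ) (f : F n) (t t' : Fin n → Tm F), OrdTuple t → OrdTuple t' →
    (∀ k, 𝒜 (t k) = 𝒜 (t' k)) → 𝒜 (.func f t) = 𝒜 (.func f t')

/-- The universe of an orderly algebra: its range on orderly terms. -/
def OAUniv (𝒜 : Tm F → β) : Set β := 𝒜 '' { t | t.Orderly }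

/-- `ℬ` is a reduction of the orderly algebra `𝒜` (as functions on orderly terms). -/
def OAReduction (ℬ 𝒜 : Tm F → β) : Prop :=
  ∃ ts : ℕ → Tm F, Tm.Admissible ts ∧ ∀ s : Tm F, s.Orderly → ℬ s = 𝒜 (s.subst ts)

/-- `ℬ` is homogeneous for `X`. -/
def Homog (ℬ : Tm F → β) (X : Set β) : Prop :=
  OAUniv ℬ ⊆ X ∨ OAUniv ℬ ∩ X = ∅

/-- An orderly algebra is weakly Ramsey. -/
def WeaklyRamseyOA (𝒜 : Tm F → β) : Prop :=
  ∀ X ⊆ OAUniv 𝒜, ∃ ℬ, OAReduction ℬ 𝒜 ∧ Homog ℬ X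

/-- An orderly algebra is Ramsey. -/
def RamseyOA (𝒜 : Tm F → β) : Prop :=
  ∀ ℬ, OAReduction ℬ 𝒜 → ∀ X ⊆ OAUniv 𝒜, ∃ 𝒞, OAReduction 𝒞 ℬ ∧ Homog 𝒞 X

/-- The orderly algebra induced from the algebra `(A, I)` by the sequence `a`. -/
def inducedOA (I : ∀ n, F n → (Fin n → A) → A) (a : ℕ → A) : Tm F → A :=
  fun t => t.realize I a

/-- `[FR(c)]ⁿ_<` : increasing `n`-tuples of finite reductions of `c`. -/
def FRtuple (I : ∀ n, F n → (Fin n → A) → A) (n : ℕ) (c : ℕ → A) : Set (Fin n → A) :=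
  { x | ∃ t : Fin n → Tm F, OrdTuple t ∧ ∀ i, x i = (t i).realize I c }

/-- `‖𝒞‖ⁿ_<` for an orderly algebra `𝒞`. -/
def OATuple (n : ℕ) (𝒞 : Tm F → β) : Set (Fin n → β) :=
  { x | ∃ t : Fin n → Tm F, OrdTuple t ∧ ∀ i, x i = 𝒞 (t i) }

/-- The basic set `[n, a]` of the preorder with approximations `(ᵂA, ≤)`. -/
def Approx (I : ∀ n, F n → (Fin n → A) → A) (n : ℕ) (a : ℕ → A) : Set (ℕ → A) :=
  { b | SeqReduction I b a ∧ ∀ i < n, b i = a i }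

/-- The natural topology on `ᵂA`, generated by the sets `[n, a]`. -/
def natTop (I : ∀ n, F n → (Fin n → A) → A) : TopologicalSpace (ℕ → A) :=
  TopologicalSpace.generateFrom { S | ∃ n a, S = Approx I n a }

/-- A subset `X ⊆ ᵂA` is Ramsey. -/
def RamseySet (I : ∀ n, F n → (Fin n → A) → A) (X : Set (ℕ → A)) : Prop :=
  ∀ (n : ℕ) (a : ℕ → A), ∃ b ∈ Approx I n a,
    Approx I n b ⊆ X ∨ Approx I n b ∩ X = ∅

/-- `X` has the property of Baire in the natural topology:
its symmetric difference with some open set is meager. -/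
def HasBaireProperty (I : ∀ n, F n → (Fin n → A) → A) (X : Set (ℕ → A)) : Prop :=
  ∃ U : Set (ℕ → A), @IsOpen _ (natTop I) U ∧ @IsMeagre _ (natTop I) (symmDiff X U)

end General

/-- The language with a single binary function symbol. -/
inductive BinF : ℕ → Type
  | f : BinF 2

/-- Application of the binary function symbol: the term `f s t`. -/
def fapp (s t : Tm BinF) : Tm BinF := .func BinF.f ![s, t]

/-- The interpretation of the single binary function symbol by a binary
operation `g` on `A`. -/
def binI {A : Type v} (g : A → A → A) : ∀ n, BinF n → (Fin n → A) → A
  | _, BinF.f, args => g (args 0) (args 1)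

/-- The pair `(tˣ, tʸ)`: `(vᵢˣ, vᵢʸ) = (v_{2i}, v_{2i+1})` and
`((f s t)ˣ, (f s t)ʸ) = (f sˣ sʸ, f tˣ tʸ)`. -/
def xyPair : Tm BinF → Tm BinF × Tm BinF
  | .var i => (.var (2 * i), .var (2 * i + 1))
  | .func BinF.f ts =>
      (fapp (xyPair (ts 0)).1 (xyPair (ts 0)).2, fapp (xyPair (ts 1)).1 (xyPair (ts 1)).2)

/-- The orderly algebra `♯𝒜`, `♯𝒜(t) = (𝒜(tˣ), 𝒜(tʸ))`. -/
def sharpOA {β : Type w} (𝒜 : Tm BinF → β) : Tm BinF → β × β :=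
  fun t => (𝒜 (xyPair t).1, 𝒜 (xyPair t).2)

/-!
If a term `f t₁ ⋯ tₙ` is orderly, then `t₁ < ⋯ < tₙ` are orderly, because no term is
variable-free (this is where arities `≥ 1` enter). So on `‖𝒜‖` one may interpret `f` at
`(𝒜 t₁, …, 𝒜 tₙ)` as `𝒜 (f t₁ ⋯ tₙ)` for any such choice of the `tₖ`, and the orderly algebra
axiom says precisely that this does not depend on the choice. With `a i := 𝒜 vᵢ`, induction
on orderly terms gives `𝒜 t = t^𝔄[a]`.
-/

namespace Tm

variable {F : ℕ → Type u}

theorem orderly_iff_pairwise {t : Tm F} : t.Orderly ↔ t.varList.Pairwise (· < ·) :=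
  List.isChain_iff_pairwise

theorem orderly_var (i : ℕ) : (var i : Tm F).Orderly := by
  simp [orderly_iff_pairwise, varList]

theorem varList_ne_nil [IsEmpty (F 0)] : ∀ t : Tm F, t.varList ≠ []
  | var _ => List.cons_ne_nil _ _
  | func (n := 0) f _ => isEmptyElim f
  | func (n := _ + 1) _ ts => by
    simpa [varList] using ⟨0, varList_ne_nil (ts 0)⟩

theorem termLT_of_forall_lt {s t : Tm F} (hs : s.varList ≠ []) (ht : t.varList ≠ [])
    (h : ∀ x ∈ s.varList, ∀ y ∈ t.varList, x < y) : TermLT s t :=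
  ⟨_, _, List.getLast?_eq_some_getLast hs, List.head?_eq_some_head ht,
    h _ (List.getLast_mem hs) _ (List.head_mem ht)⟩

theorem Orderly.ordTuple [IsEmpty (F 0)] {n : ℕ} {f : F n} {ts : Fin n → Tm F}
    (h : (func f ts).Orderly) : OrdTuple ts := by
  rw [orderly_iff_pairwise, varList, ← List.ofFn_id, List.pairwise_flatMap,
    List.pairwise_ofFn] at h
  exact ⟨fun i => orderly_iff_pairwise.2 (h.1 _ (List.mem_ofFn.2 ⟨i, rfl⟩)),
    fun i j hij => termLT_of_forall_lt (varList_ne_nil _) (varList_ne_nil _) (h.2 hij)⟩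

end Tm

section InducedStructure

variable {F : ℕ → Type u} {β : Type w}

def univVar (𝒜 : Tm F → β) (i : ℕ) : OAUniv 𝒜 :=
  ⟨𝒜 (.var i), _, Tm.orderly_var i, rfl⟩

/-- Tuples not of the form `(𝒜 t₁, …, 𝒜 tₙ)` with `f t₁ ⋯ tₙ` orderly go to the junk value `𝒜 v₀`. -/
noncomputable def univInterp (𝒜 : Tm F → β) (n : ℕ) (f : F n) (x : Fin n → OAUniv 𝒜) :
    OAUniv 𝒜 := by
  classical
  exact if h : ∃ ts : Fin n → Tm F, (Tm.func f ts).Orderly ∧ ∀ i, 𝒜 (ts i) = x i then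
    ⟨𝒜 (.func f h.choose), _, h.choose_spec.1, rfl⟩
  else univVar 𝒜 0

theorem univInterp_eq [IsEmpty (F 0)] {𝒜 : Tm F → β} (h𝒜 : IsOrderlyAlg 𝒜) {n : ℕ} {f : F n}
    {ts : Fin n → Tm F} (hts : (Tm.func f ts).Orderly) :
    (univInterp 𝒜 n f fun i => ⟨𝒜 (ts i), _, hts.ordTuple.1 i, rfl⟩ : β) = 𝒜 (.func f ts) := by
  have hex : ∃ ts' : Fin n → Tm F, (Tm.func f ts').Orderly ∧ ∀ i, 𝒜 (ts' i) = 𝒜 (ts i) :=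
    ⟨ts, hts, fun _ => rfl⟩
  rw [univInterp, dif_pos hex]
  exact h𝒜 n f _ ts hex.choose_spec.1.ordTuple hts.ordTuple hex.choose_spec.2

end InducedStructure

/-- Every orderly algebra is induced from some algebra whose
underlying set is the universe `‖𝒜‖` of `𝒜`, by some sequence `a`. -/
theorem orderly_algebra_is_induced {F : ℕ → Type u} [IsEmpty (F 0)] {β : Type w}
    (𝒜 : Tm F → β) (h𝒜 : IsOrderlyAlg 𝒜) :
    ∃ (I : ∀ n, F n → (Fin n → ↥(OAUniv 𝒜)) → ↥(OAUniv 𝒜))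
      (a : ℕ → ↥(OAUniv 𝒜)),
      ∀ t : Tm F, t.Orderly → 𝒜 t = ↑(t.realize I a) := by
  refine ⟨univInterp 𝒜, univVar 𝒜, fun t ht => ?_⟩
  induction t with
  | var i => rfl
  | func f ts ih =>
    have hargs : (fun i => (ts i).realize (univInterp 𝒜) (univVar 𝒜)) =
        fun i => ⟨𝒜 (ts i), _, ht.ordTuple.1 i, rfl⟩ :=
      funext fun i => Subtype.ext (ih i (ht.ordTuple.1 i)).symm
    rw [Tm.realize, hargs, univInterp_eq h𝒜 ht]
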